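/- arXiv:2009.01619 — 4 statements merged into one kernel-verified Lean document; each statement's English description precedes it below -/
import Mathlib

section
/- Let (P_i)_{i ∈ I} be a family of partial orders, each having a greatest element 1_i and each weakly homogeneous. Then the finite support product P = {p ∈ Π_{i∈I} P_i : {i ∈ I : p(i) ≠ 1_i} is finite}, ordered pointwise, is weakly homogeneous. -/
/-- The finite support product of a family of partial orders with greatest elements:
all functions `p` with `p i = ⊤` for all but finitely many `i`, ordered pointwise. -/
abbrev FinSuppProd {I : Type*} (P : I → Type*) [∀ i, PartialOrder (P i)]
    [∀ i, OrderTop (P i)] : Type _ :=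
  {p : ∀ i, P i // {i | p i ≠ ⊤}.Finite}

/-- A pointwise family of order automorphisms induces an automorphism of the
finite support product. -/
def pointwiseIso {I : Type*} {P : I → Type*} [∀ i, PartialOrder (P i)]
    [∀ i, OrderTop (P i)] (f : ∀ i, P i ≃o P i) :
    FinSuppProd P ≃o FinSuppProd P where
  toFun p := ⟨fun i => f i (p.1 i), p.2.subset (by
    intro i hi
    simp only [Set.mem_setOf_eq] at hi ⊢
    intro h
    exact hi (by rw [h]; exact map_top (f i)))⟩
  invFun p := ⟨fun i => (f i).symm (p.1 i), p.2.subset (by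
    intro i hi
    simp only [Set.mem_setOf_eq] at hi ⊢
    intro h
    exact hi (by rw [h]; exact map_top (f i).symm))⟩
  left_inv p := Subtype.ext (funext fun i => (f i).symm_apply_apply _)
  right_inv p := Subtype.ext (funext fun i => (f i).apply_symm_apply _)
  map_rel_iff' {p q} := by
    constructor
    · intro h i
      have := h i
      simpa using (f i).le_iff_le.mp this
    · intro h i
      exact (f i).le_iff_le.mpr (h i)

/-- A finite support product of weakly homogeneous partial orders
(each with a greatest element) is weakly homogeneous. -/
theorem stmt_2 {I : Type*} (P : I → Type*) [∀ i, PartialOrder (P i)]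
    [∀ i, OrderTop (P i)]
    (hwh : ∀ i, ∀ p q : P i, ∃ a : P i ≃o P i, ∃ r : P i, r ≤ a p ∧ r ≤ q) :
    ∀ p q : FinSuppProd P, ∃ a : FinSuppProd P ≃o FinSuppProd P,
      ∃ r : FinSuppProd P, r ≤ a p ∧ r ≤ q := by
  intro p q
  choose a r hr1 hr2 using fun i => hwh i (p.1 i) (q.1 i)
  classical
  set S : Set I := {i | p.1 i ≠ ⊤} ∪ {i | q.1 i ≠ ⊤} with hS
  have hSfin : S.Finite := p.2.union q.2
  refine ⟨pointwiseIso a, ⟨fun i => if i ∈ S then r i else ⊤, ?_⟩, ?_, ?_⟩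
  · refine hSfin.subset ?_
    intro i hi
    simp only [Set.mem_setOf_eq] at hi
    by_contra h
    simp [h] at hi
  · intro i
    show (if i ∈ S then r i else ⊤) ≤ (a i) (p.1 i)
    by_cases h : i ∈ S
    · rw [if_pos h]; exact hr1 i
    · have hp : p.1 i = ⊤ := by
        by_contra hp; exact h (Or.inl hp)
      rw [if_neg h]
      exact le_of_eq (by rw [hp]; exact (map_top (a i)).symm)
  · intro i
    show (if i ∈ S then r i else ⊤) ≤ q.1 i
    by_cases h : i ∈ S
    · rw [if_pos h]; exact hr2 i
    · have hq : q.1 i = ⊤ := by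
        by_contra hq; exact h (Or.inr hq)
      rw [if_neg h]; exact le_of_eq hq.symm
end

section
/- Let (P_i)_{i ∈ I} be a family of partial orders, each having a greatest element 1_i and each cone homogeneous. Then the finite support product P = {p ∈ Π_{i∈I} P_i : {i ∈ I : p(i) ≠ 1_i} is finite}, ordered pointwise, is cone homogeneous. -/
/-- A finite support product of cone homogeneous partial orders
(each with a greatest element) is cone homogeneous. -/
theorem stmt_3 {I : Type*} (P : I → Type*) [∀ i, PartialOrder (P i)]
    [∀ i, OrderTop (P i)]
    (hch : ∀ i, ∀ p q : P i, ∃ p' q' : P i, p' ≤ p ∧ q' ≤ q ∧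
      Nonempty ({r : P i // r ≤ p'} ≃o {r : P i // r ≤ q'})) :
    ∀ p q : FinSuppProd P, ∃ p' q' : FinSuppProd P, p' ≤ p ∧ q' ≤ q ∧
      Nonempty ({r : FinSuppProd P // r ≤ p'} ≃o {r : FinSuppProd P // r ≤ q'}) := by
  classical
  intro p q
  have H : ∀ i, ∃ p' q' : P i, p' ≤ p.1 i ∧ q' ≤ q.1 i ∧
      ((p.1 i = ⊤ ∧ q.1 i = ⊤) → (p' = ⊤ ∧ q' = ⊤)) ∧
      Nonempty {f : {r : P i // r ≤ p'} ≃o {r : P i // r ≤ q'} //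
        (p.1 i = ⊤ ∧ q.1 i = ⊤) → ∀ x, ((f x : {r : P i // r ≤ q'}) : P i) = (x : P i)} := by
    intro i
    by_cases h : p.1 i = ⊤ ∧ q.1 i = ⊤
    · exact ⟨⊤, ⊤, h.1.ge, h.2.ge, fun _ => ⟨rfl, rfl⟩, ⟨⟨OrderIso.refl _, fun _ x => rfl⟩⟩⟩
    · obtain ⟨p', q', h1, h2, ⟨f⟩⟩ := hch i (p.1 i) (q.1 i)
      exact ⟨p', q', h1, h2, fun hh => absurd hh h, ⟨⟨f, fun hh => absurd hh h⟩⟩⟩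
  choose p' q' hp' hq' htop hne using H
  let e : ∀ i, {r : P i // r ≤ p' i} ≃o {r : P i // r ≤ q' i} := fun i => ((hne i).some).1
  have hetop : ∀ i, (p.1 i = ⊤ ∧ q.1 i = ⊤) →
      ∀ x, ((e i x : {r : P i // r ≤ q' i}) : P i) = (x : P i) :=
    fun i => ((hne i).some).2
  have hetop' : ∀ i, (p.1 i = ⊤ ∧ q.1 i = ⊤) →
      ∀ y, (((e i).symm y : {r : P i // r ≤ p' i}) : P i) = (y : P i) := by
    intro i h y
    have := hetop i h ((e i).symm y)
    rw [OrderIso.apply_symm_apply] at this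
    exact this.symm
  have hS : ({i | p.1 i ≠ ⊤} ∪ {i | q.1 i ≠ ⊤}).Finite := p.2.union q.2
  have hfinp : {i | p' i ≠ ⊤}.Finite := hS.subset (fun i hi => by
    by_contra hmem
    simp only [Set.mem_union, Set.mem_setOf_eq, not_or, not_not] at hmem
    exact hi ((htop i ⟨hmem.1, hmem.2⟩).1))
  have hfinq : {i | q' i ≠ ⊤}.Finite := hS.subset (fun i hi => by
    by_contra hmem
    simp only [Set.mem_union, Set.mem_setOf_eq, not_or, not_not] at hmem
    exact hi ((htop i ⟨hmem.1, hmem.2⟩).2))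
  refine ⟨⟨p', hfinp⟩, ⟨q', hfinq⟩, fun i => hp' i, fun i => hq' i, ⟨?_⟩⟩
  refine
    { toFun := fun r => ⟨⟨fun i => (e i ⟨r.1.1 i, r.2 i⟩ : P i), ?_⟩,
        fun i => (e i ⟨r.1.1 i, r.2 i⟩).2⟩
      invFun := fun s => ⟨⟨fun i => ((e i).symm ⟨s.1.1 i, s.2 i⟩ : P i), ?_⟩,
        fun i => ((e i).symm ⟨s.1.1 i, s.2 i⟩).2⟩
      left_inv := ?_
      right_inv := ?_
      map_rel_iff' := ?_ }
  · -- finiteness forward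
    refine (hS.union r.1.2).subset (fun i hi => ?_)
    by_contra hmem
    simp only [Set.mem_union, Set.mem_setOf_eq, not_or, not_not] at hmem
    exact hi (by show ((e i ⟨r.1.1 i, r.2 i⟩ : {x : P i // x ≤ q' i}) : P i) = ⊤
                 rw [hetop i hmem.1 ⟨r.1.1 i, r.2 i⟩]; exact hmem.2)
  · -- finiteness backward
    refine (hS.union s.1.2).subset (fun i hi => ?_)
    by_contra hmem
    simp only [Set.mem_union, Set.mem_setOf_eq, not_or, not_not] at hmem
    exact hi (by show (((e i).symm ⟨s.1.1 i, s.2 i⟩ : {x : P i // x ≤ p' i}) : P i) = ⊤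
                 rw [hetop' i hmem.1 ⟨s.1.1 i, s.2 i⟩]; exact hmem.2)
  · intro r
    ext i
    show (((e i).symm ⟨(e i ⟨r.1.1 i, r.2 i⟩ : P i), _⟩ : {x : P i // x ≤ p' i}) : P i) = r.1.1 i
    have : (⟨(e i ⟨r.1.1 i, r.2 i⟩ : P i), _⟩ : {x : P i // x ≤ q' i}) = e i ⟨r.1.1 i, r.2 i⟩ :=
      Subtype.ext rfl
    rw [this, OrderIso.symm_apply_apply]
  · intro s
    ext i
    show ((e i ⟨((e i).symm ⟨s.1.1 i, s.2 i⟩ : P i), _⟩ : {x : P i // x ≤ q' i}) : P i) = s.1.1 i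
    have : (⟨((e i).symm ⟨s.1.1 i, s.2 i⟩ : P i), _⟩ : {x : P i // x ≤ p' i}) =
        (e i).symm ⟨s.1.1 i, s.2 i⟩ := Subtype.ext rfl
    rw [this, OrderIso.apply_symm_apply]
  · intro a b
    constructor
    · intro h i
      have hi : (e i ⟨a.1.1 i, a.2 i⟩) ≤ (e i ⟨b.1.1 i, b.2 i⟩) := h i
      exact (e i).le_iff_le.mp hi
    · intro h i
      exact (e i).le_iff_le.mpr (h i)
end

section
/- Let κ be an uncountable cardinal and W a κ-complete ultrafilter on κ. Suppose g : κ → κ satisfies: (i) g is not constant on any set in W; and (ii) every function f : κ → κ with {α < κ : f(α) < g(α)} ∈ W is constant on some set in W. Then the pushforward ultrafilter g_*(W) = {X ⊆ κ : g⁻¹(X) ∈ W} is a κ-complete nonprincipal ultrafilter on κ that is normal, i.e., every regressive function h : κ → κ is constant on some set in g_*(W). -/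
open Cardinal

namespace Ultrafilter

variable {α β : Type*} {W : Ultrafilter α} {g : α → β}

theorem iInter_mem_map_of_iInter_mem {κ : Cardinal}
    (hcomp : ∀ {ι : Type} (s : ι → Set α), #ι < κ → (∀ i, s i ∈ W) → (⋂ i, s i) ∈ W)
    {ι : Type} (s : ι → Set β) (hι : #ι < κ) (hs : ∀ i, s i ∈ map g W) :
    (⋂ i, s i) ∈ map g W := by
  rw [mem_map, Set.preimage_iInter]
  exact hcomp _ hι hs

theorem singleton_notMem_map (hg : ∀ X ∈ W, ¬ ∃ c, ∀ x ∈ X, g x = c) (b : β) :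
    ({b} : Set β) ∉ map g W :=
  fun hb => hg _ hb ⟨b, fun _ hx => hx⟩

/-- Being non-constant on large sets, `g` avoids the least element almost everywhere, so
`h ∘ g < g` almost everywhere; then `h ∘ g` is constant on some `X ∈ W`, i.e. `h` is
constant on `g '' X`. -/
theorem exists_mem_map_eqOn_const_of_regressive [LinearOrder β] [WellFoundedLT β]
    (hg : ∀ X ∈ W, ¬ ∃ c, ∀ x ∈ X, g x = c)
    (hbelow : ∀ f : α → β, {a | f a < g a} ∈ W → ∃ X ∈ W, ∃ c, ∀ x ∈ X, f x = c)
    (h : β → β) (hreg : ∀ b : β, (∃ b', b' < b) → h b < b) :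
    ∃ X ∈ map g W, ∃ c, ∀ b ∈ X, h b = c := by
  have : Nonempty β := ⟨g (W.nonempty_of_mem Filter.univ_mem).some⟩
  obtain ⟨m, -, hm⟩ := wellFounded_lt.has_min (Set.univ : Set β) Set.univ_nonempty
  have hne : {a | g a ≠ m} ∈ W := compl_mem_iff_notMem.2 (singleton_notMem_map hg m)
  have hlt : {a | h (g a) < g a} ∈ W := W.mem_of_superset hne fun a ha =>
    hreg _ ⟨m, lt_of_le_of_ne (not_lt.1 (hm (g a) trivial)) (Ne.symm ha)⟩
  obtain ⟨X, hX, c, hc⟩ := hbelow (h ∘ g) hlt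
  refine ⟨g '' X, W.mem_of_superset hX (Set.subset_preimage_image g X), c, ?_⟩
  rintro _ ⟨x, hx, rfl⟩
  exact hc x hx

end Ultrafilter

theorem stmt_9_general (κ : Cardinal)
    (W : Ultrafilter κ.ord.ToType)
    (hcomp : ∀ {ι : Type} (s : ι → Set κ.ord.ToType), #ι < κ →
      (∀ i, s i ∈ W) → (⋂ i, s i) ∈ W)
    (g : κ.ord.ToType → κ.ord.ToType)
    (h1 : ∀ X ∈ W, ¬ ∃ c, ∀ x ∈ X, g x = c)
    (h2 : ∀ f : κ.ord.ToType → κ.ord.ToType, {a | f a < g a} ∈ W →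
      ∃ X ∈ W, ∃ c, ∀ x ∈ X, f x = c) :
    (∀ {ι : Type} (s : ι → Set κ.ord.ToType), #ι < κ →
      (∀ i, s i ∈ Ultrafilter.map g W) → (⋂ i, s i) ∈ Ultrafilter.map g W) ∧
    (∀ x : κ.ord.ToType, ({x} : Set κ.ord.ToType) ∉ Ultrafilter.map g W) ∧
    (∀ h : κ.ord.ToType → κ.ord.ToType,
      (∀ α : κ.ord.ToType, (∃ β, β < α) → h α < α) →
      ∃ X ∈ Ultrafilter.map g W, ∃ c, ∀ β ∈ X, h β = c) :=
  ⟨Ultrafilter.iInter_mem_map_of_iInter_mem hcomp,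
    Ultrafilter.singleton_notMem_map h1,
    Ultrafilter.exists_mem_map_eqOn_const_of_regressive h1 h2⟩

/-- Let `W` be a `κ`-complete ultrafilter on an uncountable cardinal
`κ` (identified with the type `κ.ord.ToType` of ordinals below `κ`) and `g : κ → κ` be
(i) non-constant on every set in `W`, and (ii) such that every `f` with
`{α : f α < g α} ∈ W` is constant on a set in `W`. Then the pushforward `g_*(W)` is a
`κ`-complete nonprincipal normal ultrafilter on `κ` (every regressive function is
constant on a set in it). -/
theorem stmt_9 (κ : Cardinal) (hκ : ℵ₀ < κ)
    (W : Ultrafilter κ.ord.ToType)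
    (hcomp : ∀ {ι : Type} (s : ι → Set κ.ord.ToType), #ι < κ →
      (∀ i, s i ∈ W) → (⋂ i, s i) ∈ W)
    (g : κ.ord.ToType → κ.ord.ToType)
    (h1 : ∀ X ∈ W, ¬ ∃ c, ∀ x ∈ X, g x = c)
    (h2 : ∀ f : κ.ord.ToType → κ.ord.ToType, {a | f a < g a} ∈ W →
      ∃ X ∈ W, ∃ c, ∀ x ∈ X, f x = c) :
    (∀ {ι : Type} (s : ι → Set κ.ord.ToType), #ι < κ →
      (∀ i, s i ∈ Ultrafilter.map g W) → (⋂ i, s i) ∈ Ultrafilter.map g W) ∧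
    (∀ x : κ.ord.ToType, ({x} : Set κ.ord.ToType) ∉ Ultrafilter.map g W) ∧
    (∀ h : κ.ord.ToType → κ.ord.ToType,
      (∀ α : κ.ord.ToType, (∃ β, β < α) → h α < α) →
      ∃ X ∈ Ultrafilter.map g W, ∃ c, ∀ β ∈ X, h β = c) :=
  stmt_9_general κ W hcomp g h1 h2
end

section
/- Let κ be a regular uncountable cardinal and λ ≥ κ a cardinal. If there exists a κ-complete fine ultrafilter on P_κ(λ), then there exists a κ-complete nonprincipal normal ultrafilter on κ; in particular, κ is a measurable cardinal carrying a normal measure. -/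
/-!
Sending each `s ∈ P_κ(λ)` to a strict upper bound of `s ∩ κ` below `κ` (one exists by regularity)
gives a function that is not constant modulo the fine ultrafilter `U`. Since `U` is countably complete,
comparing functions into `κ` modulo `U` is well-founded, so there is a least function `f` that is
not constant modulo `U`. For a regressive `h`, `h ∘ f` lies below `f` modulo `U`, hence is constant
modulo `U`; that is, `U.map f` is normal. It is `κ`-complete and nonprincipal because `U` is
`κ`-complete and `f` is not constant.
-/

open Cardinal

/-- `Pk κ α` is `P_κ(α)`: the collection of subsets of `α` of cardinality less than `κ`. -/
def Pk (κ : Cardinal) (α : Type) : Type := {s : Set α // #s < κ}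

open Filter

theorem Order.exists_forall_lt_of_mk_lt_cof {α : Type*} [LinearOrder α] {s : Set α}
    (hs : #s < Order.cof α) : ∃ x, ∀ y ∈ s, y < x :=
  not_isCofinal_iff.1 fun h => (Order.cof_le h).not_gt hs

theorem Filter.wellFounded_eventually_lt {α β : Type*} {l : Filter α} [CountableInterFilter l]
    [l.NeBot] [LT β] [WellFoundedLT β] :
    WellFounded fun g f : α → β => ∀ᶠ a in l, g a < f a := by
  refine wellFounded_iff_isEmpty_descending_chain.2 ⟨fun ⟨f, hf⟩ => ?_⟩
  obtain ⟨a, ha⟩ := (eventually_countable_forall.2 hf).exists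
  obtain ⟨n, hn⟩ := WellFounded.not_rel_apply_succ (r := (· < ·)) fun n => f n a
  exact hn (ha n)

namespace Ultrafilter

variable {α β : Type} {κ : Cardinal}

def IsComplete (κ : Cardinal) (D : Ultrafilter α) : Prop :=
  ∀ {ι : Type} (s : ι → Set α), #ι < κ → (∀ i, s i ∈ D) → (⋂ i, s i) ∈ D

def IsNormal [LT α] (D : Ultrafilter α) : Prop :=
  ∀ h : α → α, (∀ a, (∃ b, b < a) → h a < a) → ∃ X ∈ D, ∃ c, ∀ b ∈ X, h b = c

theorem IsComplete.map {D : Ultrafilter α} (hD : D.IsComplete κ) (f : α → β) :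
    (D.map f).IsComplete κ := fun s hs hmem => by
  rw [mem_map, Set.preimage_iInter]
  exact hD _ hs hmem

theorem IsComplete.countableInterFilter {D : Ultrafilter α} (hD : D.IsComplete κ)
    (hκ : ℵ₀ < κ) : CountableInterFilter (D : Filter α) where
  countable_sInter_mem S hS hmem := by
    rw [Set.sInter_eq_iInter]
    exact hD (fun s : S => s.1) (hS.le_aleph0.trans_lt hκ) fun s => hmem s s.2

theorem singleton_notMem_map_of_forall_lt [Preorder β] {U : Ultrafilter α} {π : α → β}
    (h : ∀ y, ∀ᶠ x in U, y < π x) (y : β) : {y} ∉ U.map π := fun hy =>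
  ((h y).and hy).exists.elim fun _ hx => hx.1.ne' hx.2

theorem eventually_not_isMin [LinearOrder α] {D : Ultrafilter α} (hD : ∀ c, {c} ∉ D) :
    ∀ᶠ a in (D : Filter α), ¬IsMin a := by
  by_cases hmin : ∃ m : α, IsMin m
  · obtain ⟨m, hm⟩ := hmin
    filter_upwards [D.compl_mem_iff_notMem.2 (hD m)] with a ham ha
    exact ham ((le_total a m).elim (fun h => le_antisymm h (hm h)) fun h => le_antisymm (ha h) h)
  · push Not at hmin
    exact Eventually.of_forall hmin

theorem exists_isNormal_map [LinearOrder β] {D : Ultrafilter α}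
    (hwf : WellFounded fun g f : α → β => ∀ᶠ a in (D : Filter α), g a < f a) (f₀ : α → β)
    (hf₀ : ∀ c, {c} ∉ D.map f₀) : ∃ f : α → β, (∀ c, {c} ∉ D.map f) ∧ (D.map f).IsNormal := by
  obtain ⟨f, hf, hmin⟩ := hwf.has_min {f | ∀ c, ({c} : Set β) ∉ D.map f} ⟨f₀, hf₀⟩
  refine ⟨f, hf, fun h hh => ?_⟩
  have hlt : ∀ᶠ a in (D : Filter α), h (f a) < f a :=
    (eventually_not_isMin hf).mono fun a ha => hh _ (not_isMin_iff.1 ha)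
  obtain ⟨c, hc⟩ : ∃ c, {c} ∈ D.map (h ∘ f) := by
    by_contra! hconst
    exact hmin _ hconst hlt
  exact ⟨h ⁻¹' {c}, hc, c, fun b hb => hb⟩

end Ultrafilter

theorem Pk.exists_forall_lt_of_isRegular {κ : Cardinal} (hreg : κ.IsRegular) {β : Type}
    (e : κ.ord.ToType ↪ β) : ∃ π : Pk κ β → κ.ord.ToType, ∀ s x, e x ∈ s.1 → x < π s := by
  have hbound (s : Pk κ β) : ∃ y, ∀ x ∈ e ⁻¹' s.1, x < y := by
    refine Order.exists_forall_lt_of_mk_lt_cof ?_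
    rw [Ordinal.cof_toType, hreg.cof_ord]
    exact (mk_preimage_of_injective e s.1 e.injective).trans_lt s.2
  choose π hπ using hbound
  exact ⟨π, hπ⟩

/-- Let `κ` be regular uncountable and `λ ≥ κ`. If there is a
`κ`-complete fine ultrafilter on `P_κ(λ)`, then there is a `κ`-complete nonprincipal
normal ultrafilter on `κ` (identified with the type `κ.ord.ToType` of ordinals below
`κ`); in particular `κ` is a measurable cardinal carrying a normal measure. -/
theorem stmt_10 (κ lam : Cardinal) (hreg : κ.IsRegular) (hκ : ℵ₀ < κ) (hkl : κ ≤ lam)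
    (U : Ultrafilter (Pk κ lam.ord.ToType))
    (hcomp : ∀ {ι : Type} (s : ι → Set (Pk κ lam.ord.ToType)), #ι < κ →
      (∀ i, s i ∈ U) → (⋂ i, s i) ∈ U)
    (hfine : ∀ a : lam.ord.ToType, {s : Pk κ lam.ord.ToType | a ∈ s.1} ∈ U) :
    ∃ D : Ultrafilter κ.ord.ToType,
      (∀ {ι : Type} (s : ι → Set κ.ord.ToType), #ι < κ →
        (∀ i, s i ∈ D) → (⋂ i, s i) ∈ D) ∧
      (∀ x : κ.ord.ToType, ({x} : Set κ.ord.ToType) ∉ D) ∧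
      (∀ h : κ.ord.ToType → κ.ord.ToType,
        (∀ α : κ.ord.ToType, (∃ β, β < α) → h α < α) →
        ∃ X ∈ D, ∃ c, ∀ β ∈ X, h β = c) := by
  have hU : U.IsComplete κ := hcomp
  have := hU.countableInterFilter hκ
  obtain ⟨e⟩ : Nonempty (κ.ord.ToType ↪ lam.ord.ToType) := by
    rwa [← Cardinal.le_def, mk_toType, mk_toType, card_ord, card_ord]
  obtain ⟨π, hπ⟩ := Pk.exists_forall_lt_of_isRegular hreg e
  have hπ_unbounded : ∀ x, ∀ᶠ s in (U : Filter _), x < π s := fun x =>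
    Filter.mem_of_superset (hfine (e x)) fun s => hπ s x
  obtain ⟨f, hf, hnormal⟩ := Ultrafilter.exists_isNormal_map Filter.wellFounded_eventually_lt π
    (Ultrafilter.singleton_notMem_map_of_forall_lt hπ_unbounded)
  exact ⟨U.map f, hU.map f, hf, hnormal⟩
end
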